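/- Let Ψ(x,z) = e^{xz} · [[z − x⁻¹, x⁻²],[0, z − x⁻¹]]. Then (∂_z³Ψ) − 3(∂_z²Ψ)·(1/z)·I + 3(∂_zΨ)·(1/z²)·I + 3Ψ·[[0, z⁻²],[0, 0]] = x³·Ψ for all x ≠ 0 and z ≠ 0. -/

import Mathlib

open Matrix

noncomputable def Psi (x z : ℂ) : Matrix (Fin 2) (Fin 2) ℂ :=
  Complex.exp (x * z) • !![z - x⁻¹, (x ^ 2)⁻¹; 0, z - x⁻¹]

/-! Write `Ψ = e^{xz} (z + C)` with `C = -x⁻¹ + x⁻² N`, `N = E₁₂`. Each entry is `e^{xz}` times an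
affine function of `z`, so `∂_zⁿ Ψ = e^{xz} (xⁿ (z + C) + n xⁿ⁻¹)`. Substituting, the identity
reduces to `x C + 1 + C N = 0`, which holds because `N² = 0`. -/

open Complex

lemma deriv_exp_mul_mul_affine (x a b : ℂ) :
    deriv (fun w => cexp (x * w) * (a * w + b))
      = fun w => cexp (x * w) * (x * a * w + (x * b + a)) := by
  funext w
  have hexp : HasDerivAt (fun w => cexp (x * w)) (cexp (x * w) * x) w := by
    simpa using ((hasDerivAt_id w).const_mul x).cexp
  have haff : HasDerivAt (fun w => a * w + b) a w := by
    simpa using ((hasDerivAt_id w).const_mul a).add_const b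
  exact (hexp.mul haff).deriv.trans (by ring)

-- The truncated `n - 1` is harmless at `n = 0`, where it is multiplied by `n`.
lemma iteratedDeriv_exp_mul_mul_affine (x a b : ℂ) (n : ℕ) :
    iteratedDeriv n (fun w => cexp (x * w) * (a * w + b))
      = fun w => cexp (x * w) * (x ^ n * (a * w + b) + n * x ^ (n - 1) * a) := by
  induction n with
  | zero => simp
  | succ n ih =>
    have hform : (fun w => cexp (x * w) * (x ^ n * (a * w + b) + n * x ^ (n - 1) * a))
        = fun w => cexp (x * w) * (x ^ n * a * w + (x ^ n * b + n * x ^ (n - 1) * a)) := by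
      funext w; ring
    rw [iteratedDeriv_succ, ih, hform, deriv_exp_mul_mul_affine]
    funext w
    cases n with
    | zero => simp; ring
    | succ n => push_cast; ring

lemma Psi_apply (x w : ℂ) (i j : Fin 2) :
    Psi x w i j = cexp (x * w) * (!![(1 : ℂ), 0; 0, 1] i j * w
      + !![-x⁻¹, (x ^ 2)⁻¹; 0, -x⁻¹] i j) := by
  fin_cases i <;> fin_cases j <;> simp [Psi] <;> ring

lemma iteratedDeriv_Psi_apply (x z : ℂ) (n : ℕ) (i j : Fin 2) :
    iteratedDeriv n (fun w => Psi x w i j) z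
      = cexp (x * z) * (x ^ n * (!![(1 : ℂ), 0; 0, 1] i j * z
          + !![-x⁻¹, (x ^ 2)⁻¹; 0, -x⁻¹] i j) + n * x ^ (n - 1) * !![(1 : ℂ), 0; 0, 1] i j) := by
  simp only [Psi_apply, iteratedDeriv_exp_mul_mul_affine]

theorem stmt1 (x z : ℂ) (hx : x ≠ 0) (hz : z ≠ 0) :
    (Matrix.of fun i j => iteratedDeriv 3 (fun w => Psi x w i j) z)
      - (3 / z) • (Matrix.of fun i j => iteratedDeriv 2 (fun w => Psi x w i j) z)
      + (3 / z ^ 2) • (Matrix.of fun i j => deriv (fun w => Psi x w i j) z)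
      + Psi x z * ((3 : ℂ) • !![0, (z ^ 2)⁻¹; 0, 0])
      = (x ^ 3) • Psi x z := by
  ext i j
  simp only [Matrix.add_apply, Matrix.sub_apply, Matrix.smul_apply, of_apply, mul_apply,
    Fin.sum_univ_two]
  rw [← iteratedDeriv_one]
  simp only [iteratedDeriv_Psi_apply]
  simp only [Psi_apply]
  fin_cases i <;> fin_cases j <;> simp <;> field_simp <;> ring
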